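/- arXiv:0805.3742 — 5 statements merged into one kernel-verified Lean document; each statement's English description precedes it below -/
import Mathlib

section
/- Let G be a finite group, H a normal subgroup of G that is a 2-group, and let n = 2k+1 be odd. Suppose a, b ∈ G both have order n, that a⁻¹·b ∈ H, and that G = H·⟨a⟩ (so G is a split extension of H by a cyclic group of order n). Then, with g = (b·a)^k, the element (g⁻¹·a·g)·b⁻¹ lies in the Frattini subgroup Φ(H) of H; that is, b ≡ a^g modulo Φ(H). -/
/-!
Pass to `G ⧸ Φ(H)`, where the image `V` of `H` has exponent two because squares of a finite
2-group lie in its Frattini subgroup. Write `B = v A` with `v ∈ V` and `χ j = A ^ j v A⁻ʲ`.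
Then `B ^ (2k+1) = 1` says that `χ 0 ⋯ χ (2k) = 1`, while expanding `(B A) ^ k` shows that
`(B A) ^ k B` is the product of the even-indexed `χ j` and `A (B A) ^ k` that of the odd-indexed
ones. These two elements of `V` are therefore mutually inverse, hence equal.
-/

open Finset
open scoped IsMulCommutative

theorem IsPGroup.pow_mem_of_isCoatom {p : ℕ} [Fact p.Prime] {P : Type*} [Group P] [Finite P]
    (hP : IsPGroup p P) {M : Subgroup P} (hM : IsCoatom M) (x : P) : x ^ p ∈ M := by
  have : Group.IsNilpotent P := hP.isNilpotent
  have : M.Normal :=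
    Subgroup.NormalizerCondition.normal_of_coatom M Group.normalizerCondition_of_isNilpotent hM
  have e : Subgroup (P ⧸ M) ≃o Set.Ici M := QuotientGroup.comapMk'OrderIso M
  have : IsSimpleOrder (Subgroup (P ⧸ M)) :=
    e.isSimpleOrder_iff.mpr (Set.isSimpleOrder_Ici_iff_isCoatom.mpr hM)
  have : Nontrivial (P ⧸ M) := Subgroup.nontrivial_iff.mp inferInstance
  have : IsSimpleGroup (P ⧸ M) := ⟨fun N _ => IsSimpleOrder.eq_bot_or_eq_top N⟩
  have hcard : Nat.card (P ⧸ M) = p := by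
    obtain ⟨n, hn⟩ := IsPGroup.iff_card.mp (hP.to_quotient M)
    have hprime : (p ^ n).Prime := hn ▸ IsSimpleGroup.prime_card
    rw [hn, hprime.eq_one_of_pow, pow_one]
  rw [← QuotientGroup.eq_one_iff, QuotientGroup.mk_pow, ← hcard, pow_card_eq_one']

theorem IsPGroup.pow_mem_frattini {p : ℕ} [Fact p.Prime] {P : Type*} [Group P] [Finite P]
    (hP : IsPGroup p P) (x : P) : x ^ p ∈ frattini P :=
  Subgroup.mem_iInf.mpr fun _ => Subgroup.mem_iInf.mpr fun hM => hP.pow_mem_of_isCoatom hM x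

theorem Subgroup.mul_pow_eq_prod_conjNormal {Q : Type*} [Group Q] {V : Subgroup Q} [V.Normal]
    [IsMulCommutative V] (v : V) (c : Q) (m : ℕ) :
    ((v : Q) * c) ^ m = ↑(∏ j ∈ range m, (MulAut.conjNormal c ^ j) v) * c ^ m := by
  induction m with
  | zero => simp
  | succ m ih =>
    rw [pow_succ, ih, prod_range_succ, Subgroup.coe_mul, ← map_pow, MulAut.conjNormal_apply]
    group

theorem Finset.prod_range_two_mul_add_one {M : Type*} [CommMonoid M] (f : ℕ → M) (k : ℕ) :
    ∏ i ∈ range (2 * k + 1), f i =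
      (∏ j ∈ range (k + 1), f (2 * j)) * ∏ j ∈ range k, f (2 * j + 1) := by
  induction k with
  | zero => simp
  | succ k ih =>
    rw [show 2 * (k + 1) + 1 = 2 * k + 1 + 1 + 1 by ring, prod_range_succ f (2 * k + 1 + 1),
      prod_range_succ f (2 * k + 1), ih, prod_range_succ (fun j => f (2 * j)) (k + 1),
      prod_range_succ (fun j => f (2 * j + 1)) k, show 2 * (k + 1) = 2 * k + 1 + 1 by ring]
    ac_rfl

theorem semiconjBy_mul_pow_of_sq_eq_one {Q : Type*} [Group Q] (V : Subgroup Q) [V.Normal]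
    (hV : ∀ v ∈ V, v ^ 2 = 1) {A B : Q} {k : ℕ} (hA : A ^ (2 * k + 1) = 1)
    (hB : B ^ (2 * k + 1) = 1) (hAB : A⁻¹ * B ∈ V) : SemiconjBy ((B * A) ^ k) B A := by
  have hV' (v : V) : v ^ 2 = 1 := Subtype.ext (hV v v.2)
  have : IsMulCommutative V :=
    ⟨⟨Commute.of_orderOf_dvd_two fun v => orderOf_dvd_of_pow_eq_one (hV' v)⟩⟩
  have hA' : A ^ (2 * k) = A⁻¹ := eq_inv_of_mul_eq_one_left (by rw [← pow_succ, hA])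
  let v : V := ⟨B * A⁻¹, by simpa using ‹V.Normal›.conj_mem _ hAB A⟩
  have hBv : B = v * A := by simp [v]
  let χ (j : ℕ) : V := (MulAut.conjNormal A ^ j) v
  have hχ (j : ℕ) : (χ j : Q) = A ^ j * v * (A ^ j)⁻¹ := by
    simp only [χ, ← map_pow, MulAut.conjNormal_apply]
  have hnorm : ∏ j ∈ range (2 * k + 1), χ j = 1 := by
    have := Subgroup.mul_pow_eq_prod_conjNormal v A (2 * k + 1)
    rwa [← hBv, hA, hB, mul_one, eq_comm, OneMemClass.coe_eq_one] at this
  have hBA : (B * A) ^ k = ↑(∏ j ∈ range k, χ (2 * j)) * A ^ (2 * k) := by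
    rw [hBv, mul_assoc, ← sq, Subgroup.mul_pow_eq_prod_conjNormal, ← pow_mul, map_pow]
    simp only [χ, ← pow_mul]
  have hu : (B * A) ^ k * B = ↑(∏ j ∈ range (k + 1), χ (2 * j)) := by
    rw [hBA, prod_range_succ, Subgroup.coe_mul, hχ, hA', hBv]
    group
  have ht : A * (B * A) ^ k = ↑(∏ j ∈ range k, χ (2 * j + 1)) := by
    have hconj : ∏ j ∈ range k, χ (2 * j + 1) =
        MulAut.conjNormal A (∏ j ∈ range k, χ (2 * j)) := by
      simp only [map_prod, χ, pow_succ', MulAut.mul_apply]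
    rw [hBA, hconj, MulAut.conjNormal_apply, hA', mul_assoc]
  rw [prod_range_two_mul_add_one] at hnorm
  rw [SemiconjBy, hu, ht]
  congr 1
  calc ∏ j ∈ range (k + 1), χ (2 * j)
      = (∏ j ∈ range (k + 1), χ (2 * j))⁻¹ :=
        (inv_eq_of_mul_eq_one_right (by rw [← sq, hV'])).symm
    _ = ∏ j ∈ range k, χ (2 * j + 1) := inv_eq_of_mul_eq_one_right hnorm

theorem the_formula_general {G : Type*} [Group G] [Finite G] (H : Subgroup G) [H.Normal]
    (hH : IsPGroup 2 H) (k : ℕ) (a b : G)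
    (ha : orderOf a = 2 * k + 1) (hb : orderOf b = 2 * k + 1)
    (hab : a⁻¹ * b ∈ H) :
    (((b * a) ^ k)⁻¹ * a * (b * a) ^ k) * b⁻¹ ∈ (frattini ↥H).map H.subtype := by
  let π := QuotientGroup.mk' ((frattini H).map H.subtype)
  have : (H.map π).Normal := .map ‹_› π (QuotientGroup.mk'_surjective _)
  have hsq : ∀ v ∈ H.map π, v ^ 2 = 1 := by
    rintro _ ⟨h, hh, rfl⟩
    rw [← map_pow, QuotientGroup.mk'_apply, QuotientGroup.eq_one_iff]
    exact ⟨⟨h, hh⟩ ^ 2, hH.pow_mem_frattini _, rfl⟩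
  have hπ {x : G} (hx : orderOf x = 2 * k + 1) : π x ^ (2 * k + 1) = 1 := by
    rw [← map_pow, ← hx, pow_orderOf_eq_one, map_one]
  have key : SemiconjBy (π ((b * a) ^ k)) (π b) (π a) := by
    simpa using semiconjBy_mul_pow_of_sq_eq_one (H.map π) hsq (hπ ha) (hπ hb)
      ⟨_, hab, by simp⟩
  rw [← QuotientGroup.eq_one_iff, ← QuotientGroup.mk'_apply, map_mul, map_mul, map_mul, map_inv,
    map_inv, mul_assoc _ (π a), ← key.eq, inv_mul_cancel_left, mul_inv_cancel]

/-- "The Formula": let `G` be a finite group, `H` a normal 2-subgroup, and `n = 2k+1` odd.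
If `a, b ∈ G` both have order `n`, are congruent modulo `H`, and `G = H⟨a⟩`, then with
`g = (b*a)^k` one has `b ≡ a^g` modulo the Frattini subgroup `Φ(H)` of `H`. -/
theorem the_formula {G : Type*} [Group G] [Finite G] (H : Subgroup G) [H.Normal]
    (hH : IsPGroup 2 H) (k : ℕ) (a b : G)
    (ha : orderOf a = 2 * k + 1) (hb : orderOf b = 2 * k + 1)
    (hab : a⁻¹ * b ∈ H)
    (hgen : H ⊔ Subgroup.zpowers a = ⊤) :
    (((b * a) ^ k)⁻¹ * a * (b * a) ^ k) * b⁻¹ ∈ (frattini ↥H).map H.subtype :=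
  the_formula_general H hH k a b ha hb hab
end

section
/- Let G be a finite group of order 2^k·n with n odd, and let P be a subgroup of G of order 2^(k−1). Let x, y ∈ G be such that ⟨P, x⟩ and ⟨P, y⟩ are Sylow 2-subgroups of G. Then the order of x·y is a power of 2 if and only if ⟨P, x⟩ = ⟨P, y⟩. Moreover, if the order of x·y equals 2^t·(2s+1) for natural numbers t and s, then conjugation by (y·x)^s carries ⟨P, x⟩ to ⟨P, y⟩, i.e. ((y·x)^s)⁻¹·⟨P, x⟩·(y·x)^s = ⟨P, y⟩. -/
/-!
Since `P` has index two in `⟨P, x⟩` and `⟨P, y⟩`, both `x` and `y` normalise `P` and map to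
involutions `a`, `b` of `Q = N_G(P)/P`; as `|P|` is half the `2`-part of `|G|`, `4 ∤ |Q|`.
In such a `Q` two commuting involutions coincide. Now `a` inverts `a * b`, so it commutes with
any involution `z ∈ ⟨a * b⟩`; then `a = z` commutes with `b`, forcing `a = b`. Hence `a * b` has
odd order, dividing `2 * s + 1`, and in the dihedral group `⟨a, b⟩` the element `(b * a) ^ s`
conjugates `a` to `b`, i.e. `((y * x) ^ s)⁻¹ * x * (y * x) ^ s ∈ y P`.
-/

open Subgroup

section Involutions

variable {Q : Type*} [Group Q]

theorem conj_pow_mul_eq_of_sq_eq_one {a b : Q} {s : ℕ} (ha : a ^ 2 = 1) (hb : b ^ 2 = 1)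
    (hab : (a * b) ^ (2 * s + 1) = 1) : ((b * a) ^ s)⁻¹ * a * (b * a) ^ s = b := by
  have hb' : b⁻¹ = b := inv_eq_of_mul_eq_one_right (by rw [← sq, hb])
  have hba : b * a = (a * b)⁻¹ := by
    rw [mul_inv_rev, hb', inv_eq_of_mul_eq_one_right (by rw [← sq, ha] : a * a = 1)]
  have hsemi : a * (b * a) ^ s = (a * b) ^ s * a :=
    (SemiconjBy.pow_right (mul_assoc a b a).symm s).eq
  calc ((b * a) ^ s)⁻¹ * a * (b * a) ^ s = (a * b) ^ s * ((a * b) ^ s * a) := by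
        rw [mul_assoc, hsemi, hba, inv_pow, inv_inv]
    _ = (a * b) ^ (2 * s + 1) * b⁻¹ := by
        rw [pow_succ, two_mul, pow_add, mul_assoc, mul_assoc, mul_assoc, mul_inv_cancel, mul_one]
    _ = b := by rw [hab, one_mul, hb']

variable [Finite Q]

theorem card_le_two_of_isPGroup (hQ : ¬ 4 ∣ Nat.card Q) {H : Subgroup Q} (hH : IsPGroup 2 H) :
    Nat.card H ≤ 2 := by
  obtain ⟨j, hj⟩ := IsPGroup.iff_card.mp hH
  have hdvd : 2 ^ j ∣ Nat.card Q := hj ▸ H.card_subgroup_dvd_card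
  have hj1 : j ≤ 1 := by
    by_contra! h
    exact hQ ((pow_dvd_pow 2 h).trans hdvd)
  exact hj ▸ Nat.pow_le_pow_right two_pos hj1

theorem eq_of_commute_of_orderOf_eq_two (hQ : ¬ 4 ∣ Nat.card Q) {a b : Q} (ha : orderOf a = 2)
    (hb : orderOf b = 2) (hab : Commute a b) : a = b := by
  have hcard : ∀ {c : Q}, orderOf c = 2 → Nat.card (zpowers c) = 2 ^ 1 := fun hc => by
    rw [Nat.card_zpowers, hc, pow_one]
  have hnorm : zpowers a ≤ normalizer (zpowers b : Set Q) := by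
    refine le_trans ?_ (centralizer_le_normalizer _)
    rw [le_centralizer_iff, zpowers_le, mem_centralizer_iff]
    rintro _ ⟨i, rfl⟩
    exact (hab.zpow_left i).eq
  have h2 := IsPGroup.to_sup_of_normal_right' (.of_card (hcard ha)) (.of_card (hcard hb)) hnorm
  have heq : zpowers a = zpowers a ⊔ zpowers b :=
    eq_of_le_of_card_ge le_sup_left (by rw [hcard ha]; exact card_le_two_of_isPGroup hQ h2)
  have hbmem : b ∈ zpowers a := heq ▸ mem_sup_right (mem_zpowers b)
  classical
  obtain ⟨i, hi, rfl⟩ := Finset.mem_image.mp (mem_zpowers_iff_mem_range_orderOf.mp hbmem)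
  rw [ha, Finset.mem_range] at hi
  interval_cases i
  · simp at hb
  · exact (pow_one a).symm

theorem odd_orderOf_mul_of_orderOf_eq_two (hQ : ¬ 4 ∣ Nat.card Q) {a b : Q} (ha : orderOf a = 2)
    (hb : orderOf b = 2) : Odd (orderOf (a * b)) := by
  have haa : a * a = 1 := by rw [← sq, ← ha, pow_orderOf_eq_one]
  have hinv : (a * b)⁻¹ = b * a := by
    rw [mul_inv_rev, inv_eq_self_of_orderOf_eq_two ha, inv_eq_self_of_orderOf_eq_two hb]
  have hsemi : SemiconjBy a (a * b) (a * b)⁻¹ := by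
    rw [SemiconjBy, hinv, ← mul_assoc, haa, mul_assoc, haa, one_mul, mul_one]
  by_contra hodd
  have h2 : 2 ∣ orderOf (a * b) := even_iff_two_dvd.mp (Nat.not_odd_iff_even.mp hodd)
  set z := (a * b) ^ (orderOf (a * b) / 2)
  have hz : orderOf z = 2 := orderOf_pow_orderOf_div (orderOf_pos _).ne' h2
  have haz : a = z := by
    refine eq_of_commute_of_orderOf_eq_two hQ ha hz ?_
    have := (hsemi.pow_right (orderOf (a * b) / 2)).eq
    rwa [inv_pow, inv_eq_self_of_orderOf_eq_two hz] at this
  have hab : a = b := by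
    refine eq_of_commute_of_orderOf_eq_two hQ ha hb (mul_right_cancel (b := a) ?_)
    have hcomm : Commute z (a * b) := (Commute.self_pow _ _).symm
    rw [← haz] at hcomm
    rw [← hcomm.eq, hsemi.eq, hinv]
  subst hab
  rw [haa, orderOf_one] at hodd
  exact hodd odd_one

end Involutions

namespace Subgroup

variable {G : Type*} [Group G] {P K : Subgroup G} {x y z : G}

abbrev NormalizerQuotient (P : Subgroup G) : Type _ :=
  normalizer (P : Set G) ⧸ P.subgroupOf (normalizer (P : Set G))

theorem relIndex_mul_card_of_le (h : P ≤ K) : P.relIndex K * Nat.card P = Nat.card K := by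
  rw [← Nat.card_congr (subgroupOfEquivOfLe h).toEquiv]
  exact index_mul_card _

theorem le_normalizer_of_relIndex_eq_two (hPK : P ≤ K) (h : P.relIndex K = 2) :
    K ≤ normalizer (P : Set G) :=
  have := normal_of_index_eq_two h
  le_normalizer_of_normal_subgroupOf hPK

theorem sq_mem_of_relIndex_eq_two (h : P.relIndex K = 2) (hz : z ∈ K) : z ^ 2 ∈ P :=
  mem_subgroupOf.mp (sq_mem_of_index_two h ⟨z, hz⟩)

theorem sup_zpowers_eq_of_inv_mul_mem (h : x⁻¹ * y ∈ P) : P ⊔ zpowers x = P ⊔ zpowers y := by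
  have key : ∀ {x y : G}, x⁻¹ * y ∈ P → P ⊔ zpowers y ≤ P ⊔ zpowers x := fun {x y} h =>
    sup_le le_sup_left <| zpowers_le.mpr <| by
      simpa using mul_mem (mem_sup_right (mem_zpowers x)) (mem_sup_left h)
  exact le_antisymm (key (by simpa using inv_mem h)) (key h)

theorem map_conj_sup_zpowers {g : G} (hg : g ∈ normalizer (P : Set G)) :
    (P ⊔ zpowers x).map (MulAut.conj g).toMonoidHom = P ⊔ zpowers (g * x * g⁻¹) := by
  have hP : P.map (MulAut.conj g).toMonoidHom = P := mem_normalizer_iff_map_conj_eq.mp hg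
  rw [Subgroup.map_sup, hP, MonoidHom.map_zpowers]
  rfl

theorem not_four_dvd_relIndex {k n : ℕ} (hG : Nat.card G = 2 ^ k * n) (hn : Odd n) (hk : k ≠ 0)
    (hP : Nat.card P = 2 ^ (k - 1)) (hPK : P ≤ K) : ¬ 4 ∣ P.relIndex K := by
  intro h4
  have : 2 ^ k * 2 ∣ 2 ^ k * n := by
    calc 2 ^ k * 2 = 4 * Nat.card P := by
          obtain ⟨j, rfl⟩ := Nat.exists_eq_add_one_of_ne_zero hk
          rw [hP, Nat.add_sub_cancel]
          ring
      _ ∣ Nat.card K := relIndex_mul_card_of_le hPK ▸ mul_dvd_mul_right h4 _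
      _ ∣ 2 ^ k * n := hG ▸ K.card_subgroup_dvd_card
  exact Nat.not_even_iff_odd.mpr hn
    (even_iff_two_dvd.mpr (Nat.dvd_of_mul_dvd_mul_left (by positivity) this))

variable [Finite G]

theorem relIndex_sup_zpowers_eq_two (h : Nat.card ↥(P ⊔ zpowers z) = 2 * Nat.card P) :
    P.relIndex (P ⊔ zpowers z) = 2 :=
  Nat.eq_of_mul_eq_mul_right Nat.card_pos ((relIndex_mul_card_of_le le_sup_left).trans h)

theorem exists_orderOf_mk_eq_two (h : Nat.card ↥(P ⊔ zpowers z) = 2 * Nat.card P) :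
    ∃ hz : z ∈ normalizer (P : Set G),
      orderOf ((⟨z, hz⟩ : normalizer (P : Set G)) : P.NormalizerQuotient) = 2 := by
  have hrel := relIndex_sup_zpowers_eq_two h
  have hzK : z ∈ P ⊔ zpowers z := mem_sup_right (mem_zpowers z)
  have hzP : z ∉ P := fun hzP => by
    rw [sup_eq_left.mpr (zpowers_le.mpr hzP), relIndex_self] at hrel
    exact absurd hrel (by norm_num)
  refine ⟨le_normalizer_of_relIndex_eq_two le_sup_left hrel hzK, orderOf_eq_prime ?_ ?_⟩
  · rw [← QuotientGroup.mk_pow, QuotientGroup.eq_one_iff, mem_subgroupOf]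
    exact sq_mem_of_relIndex_eq_two hrel hzK
  · rwa [Ne, QuotientGroup.eq_one_iff, mem_subgroupOf]

theorem map_conj_sup_zpowers_eq_of_orderOf_eq (h4 : ¬ 4 ∣ Nat.card P.NormalizerQuotient)
    (hx : x ∈ normalizer (P : Set G)) (hy : y ∈ normalizer (P : Set G))
    (ha : orderOf ((⟨x, hx⟩ : normalizer (P : Set G)) : P.NormalizerQuotient) = 2)
    (hb : orderOf ((⟨y, hy⟩ : normalizer (P : Set G)) : P.NormalizerQuotient) = 2)
    {t s : ℕ} (hts : orderOf (x * y) = 2 ^ t * (2 * s + 1)) :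
    (P ⊔ zpowers x).map (MulAut.conj ((y * x) ^ s)⁻¹).toMonoidHom = P ⊔ zpowers y := by
  set a := ((⟨x, hx⟩ : normalizer (P : Set G)) : P.NormalizerQuotient)
  set b := ((⟨y, hy⟩ : normalizer (P : Set G)) : P.NormalizerQuotient)
  have hdvd : orderOf (a * b) ∣ 2 ^ t * (2 * s + 1) := by
    rw [← hts, ← orderOf_mk (x * y) (mul_mem hx hy)]
    exact orderOf_map_dvd (QuotientGroup.mk' _) _
  have hodd := odd_orderOf_mul_of_orderOf_eq_two h4 ha hb
  have hab : (a * b) ^ (2 * s + 1) = 1 := orderOf_dvd_iff_pow_eq_one.mp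
    (((Nat.coprime_two_right.mpr hodd).pow_right t).dvd_of_dvd_mul_left hdvd)
  have hconj := conj_pow_mul_eq_of_sq_eq_one (ha ▸ pow_orderOf_eq_one a)
    (hb ▸ pow_orderOf_eq_one b) hab
  have hg : ((y * x) ^ s)⁻¹ ∈ normalizer (P : Set G) := inv_mem (pow_mem (mul_mem hy hx) s)
  rw [map_conj_sup_zpowers hg, inv_inv]
  refine sup_zpowers_eq_of_inv_mul_mem ?_
  simp only [a, b, ← QuotientGroup.mk_mul, ← QuotientGroup.mk_pow, ← QuotientGroup.mk_inv] at hconj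
  simpa using mem_subgroupOf.mp (QuotientGroup.eq.mp hconj)

end Subgroup

/-- Let `G` be a finite group of order `2^k * n` with `n` odd, and `P ≤ G` of order `2^(k-1)`.
If `⟨P, x⟩` and `⟨P, y⟩` are Sylow 2-subgroups of `G` (i.e. have order `2^k`), then `x*y` has
2-power order iff `⟨P, x⟩ = ⟨P, y⟩`; and if `|x*y| = 2^t * (2s+1)` then `(y*x)^s` conjugates
`⟨P, x⟩` to `⟨P, y⟩`. -/
theorem index_two_sylow {G : Type*} [Group G] [Fintype G] (k n : ℕ) (hn : Odd n)
    (hcard : Fintype.card G = 2 ^ k * n)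
    (P : Subgroup G) (hP : Nat.card P = 2 ^ (k - 1))
    (x y : G)
    (hx : Nat.card ↥(P ⊔ Subgroup.zpowers x) = 2 ^ k)
    (hy : Nat.card ↥(P ⊔ Subgroup.zpowers y) = 2 ^ k) :
    ((∃ t : ℕ, orderOf (x * y) = 2 ^ t) ↔
        P ⊔ Subgroup.zpowers x = P ⊔ Subgroup.zpowers y) ∧
    ∀ t s : ℕ, orderOf (x * y) = 2 ^ t * (2 * s + 1) →
      (P ⊔ Subgroup.zpowers x).map (MulAut.conj (((y * x) ^ s)⁻¹)).toMonoidHom =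
        P ⊔ Subgroup.zpowers y := by
  obtain rfl | hk := eq_or_ne k 0
  · have hone : ∀ {z : G}, Nat.card ↥(P ⊔ zpowers z) = 2 ^ 0 → z = 1 := fun hz =>
      zpowers_eq_bot.mp (sup_eq_bot_iff.mp (card_eq_one.mp hz)).2
    obtain rfl := hone hx
    obtain rfl := hone hy
    simpa using ⟨⟨0, rfl⟩, fun _ _ _ => P.map_id⟩
  have hG : Nat.card G = 2 ^ k * n := by rw [Nat.card_eq_fintype_card, hcard]
  have hdouble : 2 ^ k = 2 * Nat.card P := by
    rw [hP, ← pow_succ', Nat.sub_add_cancel (Nat.one_le_iff_ne_zero.mpr hk)]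
  obtain ⟨hxN, ha⟩ := exists_orderOf_mk_eq_two (hx.trans hdouble)
  obtain ⟨hyN, hb⟩ := exists_orderOf_mk_eq_two (hy.trans hdouble)
  have h4 : ¬ 4 ∣ Nat.card P.NormalizerQuotient := not_four_dvd_relIndex hG hn hk hP le_normalizer
  have hconj := fun t s => map_conj_sup_zpowers_eq_of_orderOf_eq (t := t) (s := s) h4 hxN hyN ha hb
  refine ⟨⟨fun ⟨t, ht⟩ => ?_, fun hxy => ?_⟩, hconj⟩
  · have h := hconj t 0 (by rw [ht, mul_zero, zero_add, mul_one])
    rw [pow_zero, inv_one, map_one] at h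
    exact (P ⊔ zpowers x).map_id.symm.trans h
  · have hmem : x * y ∈ P ⊔ zpowers x :=
      mul_mem (mem_sup_right (mem_zpowers x)) (hxy ▸ mem_sup_right (mem_zpowers y))
    simpa using IsPGroup.iff_orderOf.mp (IsPGroup.of_card hx) ⟨x * y, hmem⟩
end

section
/- Let F be a finite field, let d be an odd natural number, let V be a d-dimensional vector space over F, and let f : V × V → F be a non-degenerate bilinear form. If g : V → V is an F-linear map with det(g) = 1 that preserves f, i.e. f(g v, g w) = f(v, w) for all v, w ∈ V, then g has 1 as an eigenvalue: there exists a nonzero vector v ∈ V with g v = v. -/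
/-!
If `g` preserves `f`, its matrix `M` in a basis satisfies `Mᵀ A M = A` with `A` the invertible
Gram matrix of `f`, so `M⁻¹` is conjugate to `Mᵀ` and has the same characteristic polynomial `p`
as `M`. Since `det M = 1` and `d` is odd, this says `p.reverse = -p`, i.e. `cᵢ + c_{d-i} = 0` for
the coefficients of `p`. As `d` is odd, `i ≠ d - i`, so the coefficients cancel in pairs in
`p(1) = ∑ cᵢ` (also in characteristic 2), and `1` is a root of `p`.
-/

open Polynomial Matrix

namespace Polynomial

theorem eval_one_eq_zero_of_reverse_eq_neg {R : Type*} [CommRing R] {p : R[X]}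
    (hodd : Odd p.natDegree) (hp : p.reverse = -p) : p.eval 1 = 0 := by
  have hcoeff : ∀ i ≤ p.natDegree, p.coeff i + p.coeff (p.natDegree - i) = 0 := by
    intro i hi
    have hi_coeff := congrArg (coeff · i) hp
    simp only [coeff_reverse, revAt_le hi, coeff_neg] at hi_coeff
    rw [hi_coeff, add_neg_cancel]
  obtain ⟨k, hk⟩ := hodd
  rw [eval_eq_sum_range]
  simp only [one_pow, mul_one]
  refine Finset.sum_involution (fun i _ => p.natDegree - i) (fun i hi => hcoeff i ?_)
    (fun i hi _ => ?_) (fun i hi => ?_) (fun i hi => ?_) <;>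
    simp only [Finset.mem_range] at hi ⊢ <;> omega

end Polynomial

namespace Matrix

variable {n R : Type*} [Fintype n] [DecidableEq n] [CommRing R]

theorem charpoly_inv_eq_of_transpose_mul_mul_eq {A M : Matrix n n R} (hA : IsUnit A)
    (h : Mᵀ * A * M = A) : M⁻¹.charpoly = M.charpoly := by
  have hinv : M⁻¹ = A⁻¹ * Mᵀ * A := by
    refine inv_eq_left_inv ?_
    rw [Matrix.mul_assoc, Matrix.mul_assoc, ← Matrix.mul_assoc Mᵀ, h,
      nonsing_inv_mul A ((isUnit_iff_isUnit_det A).1 hA)]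
  rw [hinv, ← charpoly_transpose M]
  exact charpoly_units_conj' hA.unit Mᵀ

theorem reverse_charpoly_eq_neg_of_det_eq_one {M : Matrix n n R} (hn : Odd (Fintype.card n))
    (hM : M.det = 1) (hinv : M⁻¹.charpoly = M.charpoly) : M.charpoly.reverse = -M.charpoly := by
  have hMu : IsUnit M := (isUnit_iff_isUnit_det M).2 (hM ▸ isUnit_one)
  have h := charpoly_inv M hMu
  rw [hinv, hM, hn.neg_one_pow, Ring.inverse_one, map_one, mul_one, ← reverse_charpoly] at h
  linear_combination h

end Matrix

theorem one_is_eigenvalue_general {F V : Type*} [Field F] [AddCommGroup V] [Module F V]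
    [FiniteDimensional F V] (d : ℕ) (hd : Odd d) (hdim : Module.finrank F V = d)
    (f : LinearMap.BilinForm F V) (hf : f.Nondegenerate)
    (g : V →ₗ[F] V) (hdet : LinearMap.det g = 1)
    (hpres : ∀ v w : V, f (g v) (g w) = f v w) :
    ∃ v : V, v ≠ 0 ∧ g v = v := by
  let b := Module.finBasisOfFinrankEq F V hdim
  set M := LinearMap.toMatrix b b g
  have hA : IsUnit (f.toMatrix b) :=
    (Matrix.isUnit_iff_isUnit_det _).2 ((f.nondegenerate_iff_det_ne_zero b).1 hf).isUnit
  have hiso : Mᵀ * f.toMatrix b * M = f.toMatrix b := by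
    rw [← LinearMap.BilinForm.toMatrix_comp]
    congr 1
    ext v w
    exact hpres v w
  have hrev : g.charpoly.reverse = -g.charpoly := by
    rw [← g.charpoly_toMatrix b]
    refine Matrix.reverse_charpoly_eq_neg_of_det_eq_one (by rwa [Fintype.card_fin]) ?_
      (Matrix.charpoly_inv_eq_of_transpose_mul_mul_eq hA hiso)
    rw [LinearMap.det_toMatrix, hdet]
  have hroot : g.charpoly.IsRoot 1 :=
    eval_one_eq_zero_of_reverse_eq_neg (by rwa [LinearMap.charpoly_natDegree, hdim]) hrev
  obtain ⟨v, hv⟩ :=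
    ((Module.End.hasEigenvalue_iff_isRoot_charpoly g 1).2 hroot).exists_hasEigenvector
  exact ⟨v, hv.2, by simpa using hv.apply_eq_smul⟩

/-- Let `F` be a finite field, `V` a `d`-dimensional `F`-vector space with `d` odd, and
`f` a non-degenerate bilinear form on `V`. Any `F`-linear `g : V → V` of determinant 1
preserving `f` has `1` as an eigenvalue. -/
theorem one_is_eigenvalue {F V : Type*} [Field F] [Finite F] [AddCommGroup V] [Module F V]
    [FiniteDimensional F V] (d : ℕ) (hd : Odd d) (hdim : Module.finrank F V = d)
    (f : LinearMap.BilinForm F V) (hf : f.Nondegenerate)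
    (g : V →ₗ[F] V) (hdet : LinearMap.det g = 1)
    (hpres : ∀ v w : V, f (g v) (g w) = f v w) :
    ∃ v : V, v ≠ 0 ∧ g v = v :=
  one_is_eigenvalue_general d hd hdim f hf g hdet hpres
end

section
/- Let F be a finite field with q elements and let V be a vector space over F. Let O be a set of 1-dimensional subspaces of V such that every 2-dimensional subspace of V contains at most 2 members of O. Then every 3-dimensional subspace of V contains at most q+2 members of O. -/
/-! Pick a member `P₀` of `O` inside `W` and project from it: `P ↦ P.map P₀.mkQ` sends the other
members of `O` inside `W` to points of the projective line `W / P₀`, which has `q + 1` points. The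
projection is injective, because two members with the same image span the same plane with `P₀`,
and that plane would then contain three members of `O`. -/

open Module
open scoped LinearAlgebra.Projectivization

theorem Submodule.finite_setOf_le {R M : Type*} [Semiring R] [AddCommMonoid M] [Module R M]
    (L : Submodule R M) [Finite L] : {Q : Submodule R M | Q ≤ L}.Finite := by
  have : ((↑) '' {Q : Submodule R M | Q ≤ L} : Set (Set M)).Finite :=
    (Set.toFinite (L : Set M)).finite_subsets.subset (by rintro _ ⟨Q, hQ, rfl⟩; exact hQ)
  exact this.of_finite_image SetLike.coe_injective.injOn

section DivisionRing

variable {K V V₂ : Type*} [DivisionRing K] [AddCommGroup V] [Module K V] [AddCommGroup V₂]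
  [Module K V₂]

theorem Submodule.ncard_setOf_le_finrank_eq_one (U : Submodule K V) :
    {P : Submodule K V | P ≤ U ∧ finrank K P = 1}.ncard = Nat.card (ℙ K U) := by
  have hinj : Function.Injective fun v : ℙ K U ↦ v.submodule.map U.subtype :=
    (map_injective_of_injective U.injective_subtype).comp Projectivization.submodule_injective
  convert Set.ncard_range_of_injective hinj using 2
  ext P
  refine ⟨fun ⟨hPU, hP⟩ ↦ ?_, ?_⟩
  · have hcomap : finrank K (P.comap U.subtype) = 1 :=
      (comapSubtypeEquivOfLe hPU).finrank_eq.trans hP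
    refine ⟨Projectivization.mk'' _ hcomap, ?_⟩
    simp [Projectivization.submodule_mk'', map_comap_subtype, hPU]
  · rintro ⟨v, rfl⟩
    exact ⟨map_subtype_le _ _, (finrank_map_subtype_eq _ _).trans v.finrank_submodule⟩

theorem LinearMap.finrank_map_add_finrank_inf_ker (f : V →ₗ[K] V₂) (U : Submodule K V)
    [FiniteDimensional K U] :
    finrank K (U.map f) + finrank K (U ⊓ ker f : Submodule K V) = finrank K U := by
  rw [← (f.domRestrict U).finrank_range_add_finrank_ker, range_domRestrict, ker_domRestrict,
    ← Submodule.map_comap_subtype, Submodule.finrank_map_subtype_eq]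

theorem Submodule.disjoint_of_finrank_eq_one {P Q : Submodule K V} (hP : finrank K P = 1)
    (hQ : finrank K Q = 1) (hPQ : P ≠ Q) : Disjoint P Q :=
  (isAtom_iff_finrank_eq_one.mpr hP).disjoint_of_ne (isAtom_iff_finrank_eq_one.mpr hQ) hPQ

theorem Submodule.finrank_sup_eq_two {P Q : Submodule K V} (hP : finrank K P = 1)
    (hQ : finrank K Q = 1) (hPQ : P ≠ Q) : finrank K (P ⊔ Q : Submodule K V) = 2 := by
  have : FiniteDimensional K P := .of_finrank_eq_succ hP
  have : FiniteDimensional K Q := .of_finrank_eq_succ hQ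
  have h := finrank_sup_add_finrank_inf_eq P Q
  rw [(disjoint_of_finrank_eq_one hP hQ hPQ).eq_bot, finrank_bot, hP, hQ] at h
  omega

theorem Submodule.finrank_map_mkQ_add_finrank_of_le {p U : Submodule K V} [FiniteDimensional K U]
    (hpU : p ≤ U) : finrank K (U.map p.mkQ) + finrank K p = finrank K U := by
  have h := p.mkQ.finrank_map_add_finrank_inf_ker U
  rwa [ker_mkQ, inf_eq_right.mpr hpU] at h

theorem Submodule.finrank_map_mkQ_of_disjoint {p U : Submodule K V} [FiniteDimensional K U]
    (hpU : Disjoint U p) : finrank K (U.map p.mkQ) = finrank K U := by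
  have h := p.mkQ.finrank_map_add_finrank_inf_ker U
  rwa [ker_mkQ, hpU.eq_bot, finrank_bot, add_zero] at h

end DivisionRing

open Submodule

theorem eq_of_sup_eq_sup_of_ncard_le_two {F V : Type*} [Field F] [Fintype F] [AddCommGroup V]
    [Module F V] {O : Set (Submodule F V)}
    (hO : ∀ P ∈ O, finrank F P = 1)
    (hline : ∀ L : Submodule F V, finrank F L = 2 → {P ∈ O | P ≤ L}.ncard ≤ 2)
    {P₀ P P' : Submodule F V} (h₀ : P₀ ∈ O) (hP : P ∈ O) (hP' : P' ∈ O) (hne : P ≠ P₀)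
    (hne' : P' ≠ P₀) (hsup : P₀ ⊔ P = P₀ ⊔ P') : P = P' := by
  by_contra hPP'
  set L := P₀ ⊔ P
  have hL : finrank F L = 2 := finrank_sup_eq_two (hO _ h₀) (hO _ hP) hne.symm
  have : FiniteDimensional F L := .of_finrank_eq_succ hL
  have : Finite L := Module.finite_of_finite F
  have hsub : ({P₀, P, P'} : Set (Submodule F V)) ⊆ {Q ∈ O | Q ≤ L} := by
    rintro Q (rfl | rfl | rfl)
    · exact ⟨h₀, le_sup_left⟩
    · exact ⟨hP, le_sup_right⟩
    · exact ⟨hP', hsup ▸ le_sup_right⟩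
  have h3 : ({P₀, P, P'} : Set (Submodule F V)).ncard = 3 :=
    Set.ncard_eq_three.mpr ⟨_, _, _, hne.symm, hne'.symm, hPP', rfl⟩
  have := (Set.ncard_le_ncard hsub (L.finite_setOf_le.subset fun Q hQ ↦ hQ.2)).trans (hline L hL)
  omega

/-- Let `F` be a finite field with `q` elements and `V` an `F`-vector space. If `O` is a set of
1-dimensional subspaces of `V` such that every 2-dimensional subspace contains at most 2 members
of `O`, then every 3-dimensional subspace contains at most `q + 2` members of `O`. -/
theorem ovoid_plane_bound {F V : Type*} [Field F] [Fintype F] [AddCommGroup V] [Module F V]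
    (O : Set (Submodule F V)) (hO : ∀ P ∈ O, Module.finrank F P = 1)
    (hline : ∀ L : Submodule F V, Module.finrank F L = 2 → {P ∈ O | P ≤ L}.ncard ≤ 2) :
    ∀ W : Submodule F V, Module.finrank F W = 3 →
      {P ∈ O | P ≤ W}.ncard ≤ Fintype.card F + 2 := by
  intro W hW
  set S := {P ∈ O | P ≤ W}
  rcases S.eq_empty_or_nonempty with hS | ⟨P₀, h₀, hP₀W⟩
  · simp [hS]
  have : FiniteDimensional F W := .of_finrank_eq_succ hW
  have hplane : finrank F (W.map P₀.mkQ) = 2 := by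
    have := finrank_map_mkQ_add_finrank_of_le hP₀W
    rw [hO _ h₀, hW] at this
    omega
  have hpoints : {U | U ≤ W.map P₀.mkQ ∧ finrank F U = 1}.ncard = Fintype.card F + 1 := by
    rw [ncard_setOf_le_finrank_eq_one, Projectivization.card_of_finrank_two F _ hplane,
      Nat.card_eq_fintype_card]
  have hmaps : ∀ P ∈ S \ {P₀}, P.map P₀.mkQ ∈ {U | U ≤ W.map P₀.mkQ ∧ finrank F U = 1} := by
    rintro P ⟨⟨hP, hPW⟩, hne⟩
    have : FiniteDimensional F P := .of_finrank_eq_succ (hO _ hP)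
    exact ⟨map_mono hPW, (finrank_map_mkQ_of_disjoint
      (disjoint_of_finrank_eq_one (hO _ hP) (hO _ h₀) hne)).trans (hO _ hP)⟩
  have hinj : Set.InjOn (·.map P₀.mkQ) (S \ {P₀}) := by
    rintro P ⟨⟨hP, -⟩, hne⟩ P' ⟨⟨hP', -⟩, hne'⟩ h
    refine eq_of_sup_eq_sup_of_ncard_le_two hO hline h₀ hP hP' hne hne' ?_
    simpa only [comap_map_mkQ] using congrArg (comap P₀.mkQ) h
  calc S.ncard ≤ (S \ {P₀}).ncard + ({P₀} : Set (Submodule F V)).ncard :=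
        Set.ncard_le_ncard_sdiff_add_ncard _ _
    _ ≤ Fintype.card F + 1 + 1 := by
        rw [Set.ncard_singleton, ← hpoints]
        gcongr
        exact Set.ncard_le_ncard_of_injOn _ hmaps hinj (Set.finite_of_ncard_pos (by omega))
end

section
/- Let F be a finite field of odd cardinality in which −1 is not a square. Consider the binary quadratic forms Q₁(v) = v₀·v₁, Q₂(v) = v₀² + v₁², and Q₃(v) = v₀² on F². Then no two of Q₁, Q₂, Q₃ are equivalent under SL(2,F) even up to scalars: for any distinct i, j ∈ {1,2,3} there is no g ∈ SL(2,F) and c ∈ F with Qᵢ(v·g) = c·Qⱼ(v) for all row vectors v ∈ F². -/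
open Matrix

/-- The three binary quadratic forms `v₀ v₁`, `v₀² + v₁²` and `v₀²` on `F²`. -/
def threeQuadForms (F : Type*) [Field F] : Fin 3 → (Fin 2 → F) → F :=
  ![fun v => v 0 * v 1, fun v => v 0 ^ 2 + v 1 ^ 2, fun v => v 0 ^ 2]

/-!
If `Q (v g) = c Q' v` with `Q ≠ 0` and `g` invertible, then `c ≠ 0`, so `v ↦ v g` maps the zero
set of `Q'` bijectively and additively onto that of `Q`. Hence whether the zero set is trivial,
and whether it is closed under addition, are invariants of the relation. The zero set of
`v₀ v₁` is the union of the two axes (nontrivial, not additively closed), that of `v₀² + v₁²` is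
`{0}` because `-1` is not a square, and that of `v₀²` is a line, which separates the three forms.
-/

section ZeroSet

variable {R V W : Type*}

def Isotropic [Zero V] [Zero R] (Q : V → R) : Prop :=
  ∃ v ≠ 0, Q v = 0

def ZerosAddClosed [Add V] [Zero R] (Q : V → R) : Prop :=
  ∀ u w, Q u = 0 → Q w = 0 → Q (u + w) = 0

lemma zero_iff_of_forall_comp_eq_mul [MulZeroClass R] [NoZeroDivisors R] {Q : W → R}
    {Q' : V → R} {e : V ≃ W} {c : R} (h : ∀ v, Q (e v) = c * Q' v) (hQ : ∃ w, Q w ≠ 0)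
    (v : V) : Q' v = 0 ↔ Q (e v) = 0 := by
  have hc : c ≠ 0 := by
    rintro rfl
    obtain ⟨w, hw⟩ := hQ
    exact hw (by simpa using h (e.symm w))
  rw [h, mul_eq_zero, or_iff_right hc]

variable [AddZeroClass V] [AddZeroClass W] [Zero R] {Q : W → R} {Q' : V → R}

lemma isotropic_iff_of_zero_iff (e : V ≃+ W) (h : ∀ v, Q' v = 0 ↔ Q (e v) = 0) :
    Isotropic Q' ↔ Isotropic Q := by
  constructor
  · rintro ⟨v, hv, hQv⟩
    exact ⟨e v, by simpa using hv, (h v).mp hQv⟩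
  · rintro ⟨w, hw, hQw⟩
    exact ⟨e.symm w, by simpa using hw, (h _).mpr (by simpa using hQw)⟩

lemma zerosAddClosed_iff_of_zero_iff (e : V ≃+ W) (h : ∀ v, Q' v = 0 ↔ Q (e v) = 0) :
    ZerosAddClosed Q' ↔ ZerosAddClosed Q := by
  constructor
  · intro hQ' u w hu hw
    have := hQ' (e.symm u) (e.symm w) ((h _).mpr (by simpa)) ((h _).mpr (by simpa))
    simpa using (h _).mp this
  · intro hQ u w hu hw
    rw [h, map_add]
    exact hQ _ _ ((h u).mp hu) ((h w).mp hw)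

end ZeroSet

lemma Matrix.SpecialLinearGroup.toLin'_transpose_apply {n R : Type*} [Fintype n]
    [DecidableEq n] [CommRing R] (g : SpecialLinearGroup n R) (v : n → R) :
    SpecialLinearGroup.toLin' g.transpose v = v ᵥ* (g : Matrix n n R) := by
  rw [SpecialLinearGroup.toLin'_apply, Matrix.toLin'_apply, SpecialLinearGroup.coe_transpose,
    mulVec_transpose]

section ThreeForms

variable {F : Type*} [Field F]

lemma sq_add_sq_eq_zero_iff (hsq : ¬∃ x : F, x ^ 2 = -1) {a b : F} :
    a ^ 2 + b ^ 2 = 0 ↔ a = 0 ∧ b = 0 := by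
  refine ⟨fun h => ?_, fun ⟨ha, hb⟩ => by simp [ha, hb]⟩
  have hb : b = 0 := by
    by_contra hb
    exact hsq ⟨a / b, by field_simp; linear_combination h⟩
  subst hb
  simpa using h

lemma threeQuadForms_exists_ne_zero (i : Fin 3) : ∃ w, threeQuadForms F i w ≠ 0 := by
  fin_cases i
  exacts [⟨![1, 1], by simp [threeQuadForms]⟩, ⟨![1, 0], by simp [threeQuadForms]⟩,
    ⟨![1, 0], by simp [threeQuadForms]⟩]

lemma isotropic_threeQuadForms_iff (hsq : ¬∃ x : F, x ^ 2 = -1) (i : Fin 3) :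
    Isotropic (threeQuadForms F i) ↔ i ≠ 1 := by
  fin_cases i
  · simpa [Isotropic, threeQuadForms] using ⟨![1, 0], by simp⟩
  · refine iff_of_false ?_ (by simp)
    rintro ⟨v, hv, hQv⟩
    obtain ⟨h0, h1⟩ := (sq_add_sq_eq_zero_iff hsq).mp hQv
    exact hv (funext <| Fin.forall_fin_two.mpr ⟨h0, h1⟩)
  · simpa [Isotropic, threeQuadForms] using ⟨![0, 1], by simp⟩

lemma zerosAddClosed_threeQuadForms_iff (hsq : ¬∃ x : F, x ^ 2 = -1) (i : Fin 3) :
    ZerosAddClosed (threeQuadForms F i) ↔ i ≠ 0 := by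
  fin_cases i
  · refine iff_of_false (fun hclosed => ?_) (by simp)
    simpa [threeQuadForms] using
      hclosed ![1, 0] ![0, 1] (by simp [threeQuadForms]) (by simp [threeQuadForms])
  · simp +contextual [ZerosAddClosed, threeQuadForms, sq_add_sq_eq_zero_iff hsq]
  · simp +contextual [ZerosAddClosed, threeQuadForms]

end ThreeForms

theorem threeQuadForms_not_equivalent_general (F : Type*) [Field F]
    (hsq : ¬∃ x : F, x ^ 2 = -1) :
    ∀ i j : Fin 3, i ≠ j →
      ¬∃ (g : Matrix.SpecialLinearGroup (Fin 2) F) (c : F),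
        ∀ v : Fin 2 → F,
          threeQuadForms F i (Matrix.vecMul v (g : Matrix (Fin 2) (Fin 2) F)) =
            c * threeQuadForms F j v := by
  rintro i j hij ⟨g, c, h⟩
  let e := (SpecialLinearGroup.toLin' g.transpose).toAddEquiv
  have hzero : ∀ v, threeQuadForms F j v = 0 ↔ threeQuadForms F i (e v) = 0 :=
    zero_iff_of_forall_comp_eq_mul (e := e.toEquiv)
      (by simpa [e, SpecialLinearGroup.toLin'_transpose_apply] using h)
      (threeQuadForms_exists_ne_zero i)
  have hiso := isotropic_iff_of_zero_iff e hzero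
  have hadd := zerosAddClosed_iff_of_zero_iff e hzero
  rw [isotropic_threeQuadForms_iff hsq, isotropic_threeQuadForms_iff hsq] at hiso
  rw [zerosAddClosed_threeQuadForms_iff hsq, zerosAddClosed_threeQuadForms_iff hsq] at hadd
  omega

/-- Over a finite field of odd order in which `-1` is not a square, no two of the quadratic
forms `v₀ v₁`, `v₀² + v₁²`, `v₀²` are equivalent under `SL(2,F)` even up to scalars. -/
theorem threeQuadForms_not_equivalent (F : Type*) [Field F] [Fintype F]
    (hodd : Odd (Fintype.card F)) (hsq : ¬∃ x : F, x ^ 2 = -1) :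
    ∀ i j : Fin 3, i ≠ j →
      ¬∃ (g : Matrix.SpecialLinearGroup (Fin 2) F) (c : F),
        ∀ v : Fin 2 → F,
          threeQuadForms F i (Matrix.vecMul v (g : Matrix (Fin 2) (Fin 2) F)) =
            c * threeQuadForms F j v :=
  threeQuadForms_not_equivalent_general F hsq
end
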